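/- Let X be a finite nonempty set, let p : X → ℝ satisfy p(x) > 0 for all x, let q : X × X → ℝ be arbitrary, and let f : X → ℝ^d. Define the matrix A ∈ ℝ^{X×X} by A_{x,y} = q(x,y)/√(p(x)·p(y)), and the matrix F ∈ ℝ^{d×X} whose column at x is √(p(x))·f(x). Then −2·∑_{x,y ∈ X} q(x,y)·⟨f(x), f(y)⟩ + ∑_{x,y ∈ X} p(x)·p(y)·⟨f(x), f(y)⟩² = ‖A − FᵀF‖²_F − ‖A‖²_F. -/

import Mathlib

open Matrix

/-- Let `X` be a finite nonempty set, `p : X → ℝ` strictly positive,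
`q : X × X → ℝ` arbitrary, and `f : X → ℝ^d`.  With `A_{x,y} = q(x,y)/√(p(x)·p(y))`
and `F` the `d × X` matrix whose column at `x` is `√(p(x))·f(x)`, we have
`−2·∑_{x,y} q(x,y)·⟨f(x),f(y)⟩ + ∑_{x,y} p(x)·p(y)·⟨f(x),f(y)⟩²
  = ‖A − FᵀF‖²_F − ‖A‖²_F`,
where the squared Frobenius norm is the sum of squared entries and
`⟨f(x),f(y)⟩ = ∑ₖ f(x)ₖ·f(y)ₖ` is the Euclidean inner product. -/
theorem stmt6 {d : ℕ} {X : Type*} [Fintype X] [Nonempty X]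
    (p : X → ℝ) (hp : ∀ x, 0 < p x)
    (q : X × X → ℝ) (f : X → Fin d → ℝ)
    (A : Matrix X X ℝ) (hA : ∀ x y, A x y = q (x, y) / Real.sqrt (p x * p y))
    (F : Matrix (Fin d) X ℝ) (hF : ∀ k x, F k x = Real.sqrt (p x) * f x k) :
    -2 * ∑ x, ∑ y, q (x, y) * (∑ k, f x k * f y k)
      + ∑ x, ∑ y, p x * p y * (∑ k, f x k * f y k) ^ 2 =
    (∑ x, ∑ y, ((A - Fᵀ * F) x y) ^ 2) - ∑ x, ∑ y, (A x y) ^ 2 := by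
  have hM : ∀ x y : X, (Fᵀ * F) x y =
      Real.sqrt (p x) * Real.sqrt (p y) * ∑ k, f x k * f y k := by
    intro x y
    simp only [Matrix.mul_apply, Matrix.transpose_apply, hF, Finset.mul_sum]
    refine Finset.sum_congr rfl fun k _ => by ring
  have key : ∀ x y : X, ((A - Fᵀ * F) x y) ^ 2 - (A x y) ^ 2 =
      -2 * (q (x, y) * ∑ k, f x k * f y k)
        + p x * p y * (∑ k, f x k * f y k) ^ 2 := by
    intro x y
    have hx := (hp x).le
    have hy := (hp y).le
    have hsx : Real.sqrt (p x) * Real.sqrt (p x) = p x := Real.mul_self_sqrt hx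
    have hsy : Real.sqrt (p y) * Real.sqrt (p y) = p y := Real.mul_self_sqrt hy
    have hne : Real.sqrt (p x) * Real.sqrt (p y) ≠ 0 :=
      mul_ne_zero (Real.sqrt_ne_zero'.mpr (hp x)) (Real.sqrt_ne_zero'.mpr (hp y))
    have hAq : A x y * (Real.sqrt (p x) * Real.sqrt (p y)) = q (x, y) := by
      rw [hA, Real.sqrt_mul hx, div_mul_cancel₀ _ hne]
    have hs : (Real.sqrt (p x) * Real.sqrt (p y)) * (Real.sqrt (p x) * Real.sqrt (p y))
        = p x * p y := by rw [mul_mul_mul_comm, hsx, hsy]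
    simp only [Matrix.sub_apply, hM]
    linear_combination (-2 * ∑ k, f x k * f y k) * hAq
      + (∑ k, f x k * f y k) ^ 2 * hs
  calc -2 * ∑ x, ∑ y, q (x, y) * (∑ k, f x k * f y k)
      + ∑ x, ∑ y, p x * p y * (∑ k, f x k * f y k) ^ 2
      = ∑ x, ∑ y, (((A - Fᵀ * F) x y) ^ 2 - (A x y) ^ 2) := by
        simp only [key]
        rw [Finset.mul_sum, ← Finset.sum_add_distrib]
        refine Finset.sum_congr rfl fun x _ => ?_
        rw [Finset.mul_sum, ← Finset.sum_add_distrib]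
    _ = (∑ x, ∑ y, ((A - Fᵀ * F) x y) ^ 2) - ∑ x, ∑ y, (A x y) ^ 2 := by
        rw [← Finset.sum_sub_distrib]
        exact Finset.sum_congr rfl fun x _ => Finset.sum_sub_distrib _ _
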